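/- If a thread T is stateless in program Q (every step of T with empty owned heap from a shared heap reachable by Q* ends in (skip, emp)), then the sequential iteration T* explores exactly the interference of unboundedly many parallel copies of T: for every k ≥ 1, Reach within the k-fold parallel composition T ∥ ⋯ ∥ T (each copy starred) equals Reach(T*) when restricted to shared heaps, i.e., adding parallel starred copies of a stateless thread does not change the set of reachable shared heaps. -/
import Mathlib


namespace Paper

/-- Threads of the core language. -/
inductive Thread (C : Type) : Type where
  | prim : C → Thread C
  | skip : Thread C
  | seq : Thread C → Thread C → Thread C
  | choice : Thread C → Thread C → Thread C
  | star : Thread C → Thread C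
  | atomic : Thread C → Thread C

/-- Heaps: partial maps from variables and addresses to naturals. -/
abbrev Heap := (String ⊕ ℕ) → Option ℕ

def emp : Heap := fun _ => none

/-- Memory-cell (address) part of the domain of a heap. -/
def addrDom (h : Heap) : Set ℕ := {a | h (Sum.inr a) ≠ none}

/-- Disjointness on memory cells. -/
def Disj (h₁ h₂ : Heap) : Prop := addrDom h₁ ∩ addrDom h₂ = ∅

abbrev Config (C : Type) := Thread C × Heap

/-- Thread-configuration maps (partial over thread identifiers). -/
abbrev Cf (C : Type) := ℕ → Option (Config C)

/-- A state (s, cf) is separated. -/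
def Separated {C : Type} (s : Heap) (cf : Cf C) : Prop :=
  (∀ i c, cf i = some c → Disj s c.2) ∧
  (∀ i j ci cj, i ≠ j → cf i = some ci → cf j = some cj → Disj ci.2 cj.2)

variable {C : Type}

mutual
  /-- Sequential small-step semantics, parameterized by the semantics `prim`
  of primitive commands (relating shared/owned heaps before and after). -/
  inductive SeqStep (prim : C → Heap → Heap → Heap → Heap → Prop) :
      Heap → Config C → Heap → Config C → Prop where
    | primStep {c s o s' o'} : prim c s o s' o' →
        SeqStep prim s (Thread.prim c, o) s' (Thread.skip, o')
    | seqL {s T₁ o s' T₁' o'} (T₂ : Thread C) :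
        SeqStep prim s (T₁, o) s' (T₁', o') →
        SeqStep prim s (Thread.seq T₁ T₂, o) s' (Thread.seq T₁' T₂, o')
    | seqSkip {s o} (T : Thread C) :
        SeqStep prim s (Thread.seq Thread.skip T, o) s (T, o)
    | choiceL {s T₁ o s' T₁' o'} (T₂ : Thread C) :
        SeqStep prim s (T₁, o) s' (T₁', o') →
        SeqStep prim s (Thread.choice T₁ T₂, o) s' (T₁', o')
    | choiceR {s T₂ o s' T₂' o'} (T₁ : Thread C) :
        SeqStep prim s (T₂, o) s' (T₂', o') →
        SeqStep prim s (Thread.choice T₁ T₂, o) s' (T₂', o')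
    | starUnfold {s o} (T : Thread C) :
        SeqStep prim s (Thread.star T, o) s (Thread.seq T (Thread.star T), o)
    | starExit {s o} (T : Thread C) :
        SeqStep prim s (Thread.star T, o) s (Thread.skip, o)
    | atomic {s T o s' o'} :
        SeqSteps prim s (T, o) s' (Thread.skip, o') →
        SeqStep prim s (Thread.atomic T, o) s' (Thread.skip, o')

  /-- Finitely many sequential steps. -/
  inductive SeqSteps (prim : C → Heap → Heap → Heap → Heap → Prop) :
      Heap → Config C → Heap → Config C → Prop where
    | refl {s c} : SeqSteps prim s c s c
    | step {s c s' c' s'' c''} : SeqStep prim s c s' c' →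
        SeqSteps prim s' c' s'' c'' → SeqSteps prim s c s'' c''
end

variable (prim : C → Heap → Heap → Heap → Heap → Prop)

/-- Parallel (program) step: one thread steps sequentially and the
resulting state must be separated. -/
def ParStep (st st' : Heap × Cf C) : Prop :=
  ∃ i c c', st.2 i = some c ∧ SeqStep prim st.1 c st'.1 c' ∧
    st'.2 = Function.update st.2 i (some c') ∧ Separated st'.1 st'.2

def ParSteps : Heap × Cf C → Heap × Cf C → Prop :=
  Relation.ReflTransGen (ParStep prim)

/-- A program is a parallel composition of finitely many threads. -/
abbrev Program (C : Type) := List (Thread C)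

/-- `Q*` : Kleene star applied to every thread. -/
def starP (P : Program C) : Program C := P.map Thread.star

/-- Initial thread configurations: each thread with the empty owned heap. -/
def cfInit (P : Program C) : Cf C := fun i => (P[i]?).map fun T => (T, emp)

/-- Reachable shared heaps of a program from initial shared heap `sinit`. -/
def Reach (sinit : Heap) (P : Program C) : Set Heap :=
  {s | ∃ cf, ParSteps prim (sinit, cfInit P) (s, cf)}

/-- Effects: single-step shared-heap updates along executions. -/
def Effects (sinit : Heap) (P : Program C) : Set (Heap × Heap) :=
  {p | ∃ cf cf', ParSteps prim (sinit, cfInit P) (p.1, cf) ∧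
       ParStep prim (p.1, cf) (p.2, cf')}

/-- Statelessness: every thread of `Q`, from any shared heap reachable by `Q*`
with empty owned heap, steps in one step to `(skip, emp)`. -/
def Stateless (sinit : Heap) (Q : Program C) : Prop :=
  ∀ T ∈ Q, ∀ s ∈ Reach prim sinit (starP Q), ∀ s' c,
    SeqStep prim s (T, emp) s' c → c = (Thread.skip, emp)

/-- Assumption 1: sequential steps preserve separation. -/
def PreservesSep : Prop :=
  ∀ s c s' c', SeqStep prim s c s' c' → Disj s c.2 → Disj s' c'.2

/-- `Q` is a stateless effect summary of `P`. -/
def IsSummary (sinit : Heap) (P Q : Program C) : Prop :=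
  Stateless prim sinit Q ∧
  ∀ T ∈ P, Effects prim sinit (T :: starP Q) ⊆ Effects prim sinit (starP Q)

/-- Sequential-step successors of a set of views. -/
def post (X : Set (Heap × Config C)) : Set (Heap × Config C) :=
  {v' | ∃ v ∈ X, SeqStep prim v.1 v.2 v'.1 v'.2}

/-- Interference successors: replace the shared heap of a view by the result
of one step of the summary `Q` from its initial configuration, subject to
separation of the resulting view. -/
def env (Q : Program C) (X : Set (Heap × Config C)) : Set (Heap × Config C) :=
  {v' | Disj v'.1 v'.2.2 ∧ ∃ s cf', (s, v'.2) ∈ X ∧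
        ParStep prim (s, cfInit Q) (v'.1, cf')}

/-- Initial views. -/
def X₀ (sinit : Heap) (P : Program C) : Set (Heap × Config C) :=
  {v | v.1 = sinit ∧ ∃ T ∈ P, v.2 = (T, emp)}

/-- The least fixed point of the thread-modular analysis with interference
computed by the candidate summary `Q`. -/
def Fix (sinit : Heap) (P Q : Program C) : Set (Heap × Config C) :=
  ⋂₀ {X | X₀ sinit P ⊆ X ∧ post prim X ⊆ X ∧ env prim Q X ⊆ X}

/-- Shared heaps occurring in the fixed point. -/
def FixHeaps (sinit : Heap) (P Q : Program C) : Set Heap :=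
  {s | ∃ c, (s, c) ∈ Fix prim sinit P Q}

lemma addrDom_emp : addrDom emp = ∅ := by
  ext a; simp [addrDom, emp]

lemma disj_emp_right (h : Heap) : Disj h emp := by
  simp [Disj, addrDom_emp]

lemma disj_emp_left (h : Heap) : Disj emp h := by
  simp [Disj, addrDom_emp]

lemma cfInit_emp {P : Program C} {i : ℕ} {c : Config C}
    (h : cfInit P i = some c) : c.2 = emp := by
  unfold cfInit at h
  rcases Option.map_eq_some_iff.1 h with ⟨a, _, rfl⟩
  rfl

lemma emp_update {cf : Cf C} (hcf : ∀ i c, cf i = some c → c.2 = emp)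
    (j : ℕ) (d : Config C) (hd : d.2 = emp) :
    ∀ i c, Function.update cf j (some d) i = some c → c.2 = emp := by
  intro i c hc
  by_cases h : i = j
  · subst h; rw [Function.update_self] at hc; cases hc; exact hd
  · rw [Function.update_of_ne h] at hc; exact hcf i c hc

lemma sep_of_emp (s : Heap) (cf : Cf C)
    (h : ∀ i c, cf i = some c → c.2 = emp) : Separated s cf := by
  refine ⟨fun i c hc => ?_, fun i j ci cj _ hi hj => ?_⟩
  · rw [h i c hc]; exact disj_emp_right s
  · rw [h i ci hi, h j cj hj]; exact disj_emp_right emp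

lemma no_step_skip {prim : C → Heap → Heap → Heap → Heap → Prop}
    {s : Heap} {o : Heap} {s' : Heap} {c' : Config C} :
    ¬ SeqStep prim s (Thread.skip, o) s' c' := fun h => nomatch h

lemma step_from_star {prim : C → Heap → Heap → Heap → Heap → Prop}
    {A : Thread C} {s o s'} {c' : Config C}
    (h : SeqStep prim s (Thread.star A, o) s' c') :
    s' = s ∧ (c' = (Thread.seq A (Thread.star A), o) ∨ c' = (Thread.skip, o)) := by
  cases h with
  | starUnfold => exact ⟨rfl, Or.inl rfl⟩
  | starExit => exact ⟨rfl, Or.inr rfl⟩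

lemma step_from_seq {prim : C → Heap → Heap → Heap → Heap → Prop}
    {A B : Thread C} {s o s'} {c' : Config C}
    (h : SeqStep prim s (Thread.seq A B, o) s' c') :
    (∃ A' o', SeqStep prim s (A, o) s' (A', o') ∧ c' = (Thread.seq A' B, o')) ∨
    (A = Thread.skip ∧ s' = s ∧ c' = (B, o)) := by
  cases h with
  | seqL _ h => exact Or.inl ⟨_, _, h, rfl⟩
  | seqSkip => exact Or.inr ⟨rfl, rfl, rfl⟩

lemma cfInit_one_zero (T : Thread C) :
    cfInit (starP [T]) 0 = some (Thread.star T, emp) := rfl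

lemma cfInit_one_succ (T : Thread C) {j : ℕ} (hj : j ≠ 0) :
    cfInit (starP [T]) j = none := by
  obtain ⟨m, rfl⟩ : ∃ m, j = m + 1 := ⟨j - 1, by omega⟩
  rfl

lemma cfInit_one_emp (T : Thread C) :
    ∀ i c, cfInit (starP [T]) i = some c → c.2 = emp :=
  fun _ _ h => cfInit_emp h

/-- key single-copy simulation step: one `T`-effect can be replayed in the
single-copy system, returning to the initial configuration. -/
lemma replay_step {prim : C → Heap → Heap → Heap → Heap → Prop}
    {sinit s s' : Heap} {T : Thread C}
    (h : ParSteps prim (sinit, cfInit (starP [T])) (s, cfInit (starP [T])))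
    (hstep : SeqStep prim s (T, emp) s' (Thread.skip, emp)) :
    ParSteps prim (sinit, cfInit (starP [T])) (s', cfInit (starP [T])) := by
  set cf0 : Cf C := cfInit (starP [T]) with hcf0
  have hemp := cfInit_one_emp (C := C) T
  set cfa : Cf C := Function.update cf0 0 (some (Thread.seq T (Thread.star T), emp)) with hcfa
  set cfb : Cf C := Function.update cf0 0 (some (Thread.seq Thread.skip (Thread.star T), emp)) with hcfb
  have hempa : ∀ i c, cfa i = some c → c.2 = emp := emp_update hemp 0 _ rfl
  have hempb : ∀ i c, cfb i = some c → c.2 = emp := emp_update hemp 0 _ rfl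
  have hba : cfb = Function.update cfa 0 (some (Thread.seq Thread.skip (Thread.star T), emp)) := by
    rw [hcfa, Function.update_idem]
  have h0b : cf0 = Function.update cfb 0 (some (Thread.star T, emp)) := by
    rw [hcfb, Function.update_idem]
    funext i
    by_cases hi : i = 0
    · subst hi; rw [Function.update_self]; rfl
    · rw [Function.update_of_ne hi]
  have stepA : ParStep prim (s, cf0) (s, cfa) :=
    ⟨0, (Thread.star T, emp), _, cfInit_one_zero T, SeqStep.starUnfold T, rfl,
      sep_of_emp _ _ hempa⟩
  have stepB : ParStep prim (s, cfa) (s', cfb) :=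
    ⟨0, (Thread.seq T (Thread.star T), emp), _, Function.update_self 0 _ cf0,
      SeqStep.seqL _ hstep, hba, sep_of_emp _ _ hempb⟩
  have stepC : ParStep prim (s', cfb) (s', cf0) :=
    ⟨0, (Thread.seq Thread.skip (Thread.star T), emp), _,
      Function.update_self 0 _ cf0, SeqStep.seqSkip _, h0b,
      sep_of_emp _ _ hemp⟩
  exact ((h.tail stepA).tail stepB).tail stepC

/-- adding parallel starred copies of a stateless thread does
not change the set of reachable shared heaps. -/
theorem stateless_copies_reach_eq
    (hps : PreservesSep prim)
    (sinit : Heap) (T : Thread C)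
    (hT : ∀ s ∈ Reach prim sinit (starP [T]), ∀ s' c,
        SeqStep prim s (T, emp) s' c → c = (Thread.skip, emp)) :
    ∀ k : ℕ, 1 ≤ k →
      Reach prim sinit (starP (List.replicate k T)) =
        Reach prim sinit (starP [T]) := by
  intro k hk
  set cf0 : Cf C := cfInit (starP [T]) with hcf0
  set cfK : Cf C := cfInit (starP (List.replicate k T)) with hcfK
  have hKval : ∀ j, cfK j = if j < k then some (Thread.star T, emp) else none := by
    intro j
    rw [hcfK]
    unfold cfInit starP
    rw [List.map_replicate, List.getElem?_replicate]
    by_cases h : j < k <;> simp [h]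
  have hKemp : ∀ i c, cfK i = some c → c.2 = emp := fun _ _ h => cfInit_emp h
  ext s
  simp only [Reach, Set.mem_setOf_eq]
  constructor
  · rintro ⟨cf, h⟩
    -- k copies are simulated by one copy
    have H : ∀ st : Heap × Cf C, ParSteps prim (sinit, cfK) st →
        ParSteps prim (sinit, cf0) (st.1, cf0) ∧
        ∀ i c, st.2 i = some c →
          c = (Thread.star T, emp) ∨ c = (Thread.seq T (Thread.star T), emp) ∨
          c = (Thread.seq Thread.skip (Thread.star T), emp) ∨ c = (Thread.skip, emp) := by
      intro st hst
      induction hst with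
      | refl =>
        refine ⟨Relation.ReflTransGen.refl, fun i c hc => ?_⟩
        replace hc : cfK i = some c := hc
        rw [hKval] at hc
        by_cases h' : i < k
        · rw [if_pos h'] at hc; cases hc; exact Or.inl rfl
        · rw [if_neg h'] at hc; cases hc
      | @tail st1 st2 h1 hstep ih =>
        obtain ⟨s1, cf1⟩ := st1
        obtain ⟨s2, cf2⟩ := st2
        obtain ⟨i, c, c', hi, hs, hcf', hsep⟩ := hstep
        have hgood := ih.2 i c hi
        have key : (c' = (Thread.star T, emp) ∨ c' = (Thread.seq T (Thread.star T), emp) ∨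
             c' = (Thread.seq Thread.skip (Thread.star T), emp) ∨ c' = (Thread.skip, emp)) ∧
            ParSteps prim (sinit, cf0) (s2, cf0) := by
          rcases hgood with h1 | h1 | h1 | h1 <;> subst h1
          · rcases step_from_star hs with ⟨rfl, h2 | h2⟩ <;> subst h2
            · exact ⟨Or.inr (Or.inl rfl), ih.1⟩
            · exact ⟨Or.inr (Or.inr (Or.inr rfl)), ih.1⟩
          · rcases step_from_seq hs with ⟨A', o', hs', rfl⟩ | ⟨hA, rfl, rfl⟩
            · have := hT _ ⟨cf0, ih.1⟩ _ _ hs'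
              rw [Prod.mk.injEq] at this
              obtain ⟨rfl, rfl⟩ := this
              exact ⟨Or.inr (Or.inr (Or.inl rfl)), replay_step ih.1 hs'⟩
            · subst hA
              exact ⟨Or.inl rfl, ih.1⟩
          · rcases step_from_seq hs with ⟨A', o', hs', rfl⟩ | ⟨hA, rfl, rfl⟩
            · exact absurd hs' no_step_skip
            · exact ⟨Or.inl rfl, ih.1⟩
          · exact absurd hs no_step_skip
        refine ⟨key.2, fun j d hd => ?_⟩
        rw [hcf'] at hd
        by_cases hji : j = i
        · subst hji; rw [Function.update_self] at hd; cases hd; exact key.1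
        · rw [Function.update_of_ne hji] at hd; exact ih.2 j d hd
    exact ⟨cf0, (H _ h).1⟩
  · rintro ⟨cf, h⟩
    -- one copy is simulated by k copies
    have H : ∀ st : Heap × Cf C, ParSteps prim (sinit, cf0) st →
        (∀ j, j ≠ 0 → st.2 j = none) ∧
        ParSteps prim (sinit, cfK) (st.1, fun j => if j = 0 then st.2 0 else cfK j) := by
      intro st hst
      induction hst with
      | refl =>
        refine ⟨fun j hj => cfInit_one_succ T hj, ?_⟩
        have : (fun j => if j = 0 then cf0 0 else cfK j) = cfK := by
          funext j
          by_cases hj : j = 0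
          · subst hj
            rw [if_pos rfl, hKval, if_pos (by omega)]
            exact cfInit_one_zero T
          · rw [if_neg hj]
        rw [this]
        exact Relation.ReflTransGen.refl
      | @tail st1 st2 h1 hstep ih =>
        obtain ⟨s1, cf1⟩ := st1
        obtain ⟨s2, cf2⟩ := st2
        obtain ⟨i, c, c', hi, hs, hcf', hsep⟩ := hstep
        have hi0 : i = 0 := by
          by_contra h'
          rw [ih.1 i h'] at hi
          cases hi
        subst hi0
        have hi1 : cf1 0 = some c := hi
        have hcf2 : cf2 = Function.update cf1 0 (some c') := hcf'
        have hs1 : SeqStep prim s1 c s2 c' := hs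
        have hsep2 : Separated s2 cf2 := hsep
        have ih1 : ∀ j, j ≠ 0 → cf1 j = none := ih.1
        have ih2 : ParSteps prim (sinit, cfK)
            (s1, fun j => if j = 0 then cf1 0 else cfK j) := ih.2
        have hc'2 : cf2 0 = some c' := by rw [hcf2, Function.update_self]
        refine ⟨fun j hj => by
          show cf2 j = none
          rw [hcf2, Function.update_of_ne hj]; exact ih1 j hj, ?_⟩
        show ParSteps prim (sinit, cfK) (s2, fun j => if j = 0 then cf2 0 else cfK j)
        refine ih2.tail ⟨0, c, c', ?_, hs1, ?_, ?_, ?_⟩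
        · show (if (0 : ℕ) = 0 then cf1 0 else cfK 0) = some c
          rw [if_pos rfl]; exact hi1
        · show (fun j => if j = 0 then cf2 0 else cfK j) =
            Function.update (fun j => if j = 0 then cf1 0 else cfK j) 0 (some c')
          funext j
          by_cases hj : j = 0
          · subst hj
            show (if (0 : ℕ) = 0 then cf2 0 else cfK 0) = _
            rw [Function.update_self, if_pos rfl]; exact hc'2
          · show (if j = 0 then cf2 0 else cfK j) = _
            rw [Function.update_of_ne hj, if_neg hj, if_neg hj]
        · -- Disj of shared heap with each owned heap
          intro j d hd
          replace hd : (if j = 0 then cf2 0 else cfK j) = some d := hd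
          by_cases hj : j = 0
          · subst hj
            rw [if_pos rfl, hc'2] at hd
            cases hd
            exact hsep2.1 0 c' hc'2
          · rw [if_neg hj] at hd
            rw [hKemp j d hd]
            exact disj_emp_right _
        · -- pairwise disjointness
          intro j j' dj dj' hne hj hj'
          replace hj : (if j = 0 then cf2 0 else cfK j) = some dj := hj
          replace hj' : (if j' = 0 then cf2 0 else cfK j') = some dj' := hj'
          by_cases h0 : j = 0
          · subst h0
            rw [if_pos rfl, hc'2] at hj
            cases hj
            rw [if_neg (Ne.symm hne)] at hj'
            rw [hKemp _ _ hj']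
            exact disj_emp_right _
          · rw [if_neg h0] at hj
            rw [hKemp _ _ hj]
            exact disj_emp_left _
    exact ⟨_, (H _ h).2⟩

end Paper
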